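/- arXiv:2404.08422 — 5 statements merged into one kernel-verified Lean document; each statement's English description precedes it below -/
import Mathlib

section
/- Let X be a spectral space and K ⊆ X a subspace which is noetherian (in the subspace topology). Then the closure of K in the constructible (patch) topology on X is also a noetherian subspace of X. -/
open Ordinal

/-- A topological space is spectral if it is homeomorphic to the Zariski
spectrum of some commutative ring. -/
def IsSpectral (X : Type*) [TopologicalSpace X] : Prop :=
  ∃ (R : Type) (_ : CommRing R), Nonempty (X ≃ₜ PrimeSpectrum R)

/-- The constructible (patch) topology: generated by quasi-compact open sets
and their complements. -/
def patchTop (X : Type*) [TopologicalSpace X] : TopologicalSpace X :=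
  TopologicalSpace.generateFrom
    {s | (IsOpen s ∧ IsCompact s) ∨ (IsOpen sᶜ ∧ IsCompact sᶜ)}

open Topology

/-- In a spectral space the quasi-compact open sets form a basis. -/
lemma isSpectral_basis (X : Type*) [TopologicalSpace X] (hX : IsSpectral X) :
    TopologicalSpace.IsTopologicalBasis {U : Set X | IsOpen U ∧ IsCompact U} := by
  obtain ⟨R, _, ⟨e⟩⟩ := hX
  apply TopologicalSpace.isTopologicalBasis_of_isOpen_of_nhds
  · rintro U ⟨h, -⟩; exact h
  · intro x u hxu hu
    have himg : IsOpen (e '' u) := e.isOpenMap u hu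
    obtain ⟨v, ⟨r, rfl⟩, hxv, hvu⟩ :=
      PrimeSpectrum.isTopologicalBasis_basic_opens.exists_subset_of_mem_open
        (Set.mem_image_of_mem e hxu) himg
    refine ⟨e ⁻¹' (PrimeSpectrum.basicOpen r : Set (PrimeSpectrum R)),
      ⟨(PrimeSpectrum.basicOpen r).isOpen.preimage e.continuous,
        e.isCompact_preimage.mpr (PrimeSpectrum.isCompact_basicOpen r)⟩, hxv, ?_⟩
    intro y hy
    obtain ⟨z, hz, hez⟩ := hvu hy
    rwa [← e.injective hez]

/-- A quasi-compact open set is open in the patch topology. -/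
lemma patch_isOpen {X : Type*} [TopologicalSpace X] {U : Set X}
    (h1 : IsOpen U) (h2 : IsCompact U) : IsOpen[patchTop X] U :=
  TopologicalSpace.isOpen_generateFrom_of_mem (Or.inl ⟨h1, h2⟩)

/-- A quasi-compact open set is closed in the patch topology. -/
lemma patch_isClosed {X : Type*} [TopologicalSpace X] {U : Set X}
    (h1 : IsOpen U) (h2 : IsCompact U) : IsClosed[patchTop X] U :=
  @IsClosed.mk X (patchTop X) U (TopologicalSpace.isOpen_generateFrom_of_mem
    (Or.inr (by rwa [compl_compl, and_iff_left h2])))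

lemma aux_mem_closure_inter {X : Type*} [TopologicalSpace X] {B K : Set X} (hB : IsOpen B)
    {x : X} (hxB : x ∈ B) (hxK : x ∈ closure K) : x ∈ closure (B ∩ K) :=
  hB.inter_closure ⟨hxB, hxK⟩

lemma aux_closure_subset {X : Type*} [TopologicalSpace X] {A U : Set X} (h : A ⊆ U)
    (hU : IsClosed U) : closure A ⊆ U :=
  closure_minimal h hU

/-- The constructible closure of a noetherian subspace of a spectral space
is noetherian. -/
theorem stmt0 (X : Type*) [TopologicalSpace X] (hX : IsSpectral X) (K : Set X)
    (hK : TopologicalSpace.NoetherianSpace K) :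
    TopologicalSpace.NoetherianSpace (@closure X (patchTop X) K) := by
  have hbasis := isSpectral_basis X hX
  set L : Set X := @closure X (patchTop X) K with hL
  -- every subset of K is compact in X
  have hKcomp : ∀ s : Set X, s ⊆ K → IsCompact s := by
    intro s hs
    have h1 : IsCompact ((Subtype.val : K → X) ⁻¹' s) :=
      TopologicalSpace.NoetherianSpace.isCompact _
    have h2 := h1.image continuous_subtype_val
    rwa [Subtype.image_preimage_coe, Set.inter_eq_self_of_subset_right hs] at h2
  -- a point of L lying in a quasi-compact open B is in the patch closure of B ∩ K
  have hcl : ∀ B : Set X, IsOpen B → IsCompact B → ∀ x ∈ L, x ∈ B →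
      x ∈ @closure X (patchTop X) (B ∩ K) := by
    intro B hBo hBc x hxL hxB
    exact @aux_mem_closure_inter X (patchTop X) B K (patch_isOpen hBo hBc) x hxB hxL
  -- every subset of L is compact in X
  have main : ∀ T : Set X, T ⊆ L → IsCompact T := by
    intro T hTL
    rw [isCompact_iff_finite_subcover]
    intro ι V hV hTV
    set W : Set X := ⋃ i, V i with hW
    have hKW : IsCompact (K ∩ W) := hKcomp _ Set.inter_subset_left
    obtain ⟨t, ht⟩ := hKW.elim_finite_subcover V hV Set.inter_subset_right
    -- find a quasi-compact open U with K ∩ W ⊆ U ⊆ ⋃ i ∈ t, V i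
    have hVt : IsOpen (⋃ i ∈ t, V i) := isOpen_biUnion fun i _ => hV i
    have hcov : ∀ y : ↥(K ∩ W), ∃ B : Set X,
        (IsOpen B ∧ IsCompact B) ∧ (y : X) ∈ B ∧ B ⊆ ⋃ i ∈ t, V i := by
      intro y
      obtain ⟨B, hB, hyB, hBsub⟩ := hbasis.exists_subset_of_mem_open (ht y.2) hVt
      exact ⟨B, hB, hyB, hBsub⟩
    choose B hBoc hyB hBsub using hcov
    obtain ⟨s, hs⟩ := hKW.elim_finite_subcover B (fun y => (hBoc y).1)
      (fun y hy => Set.mem_iUnion.mpr ⟨⟨y, hy⟩, hyB ⟨y, hy⟩⟩)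
    set U : Set X := ⋃ y ∈ s, B y with hU
    have hUo : IsOpen U := isOpen_biUnion fun y _ => (hBoc y).1
    have hUc : IsCompact U := s.isCompact_biUnion fun y _ => (hBoc y).2
    have hUsub : U ⊆ ⋃ i ∈ t, V i := Set.iUnion₂_subset fun y _ => hBsub y
    have hUclosed : IsClosed[patchTop X] U := patch_isClosed hUo hUc
    -- T is contained in ⋃ i ∈ t, V i
    refine ⟨t, fun x hxT => ?_⟩
    obtain ⟨i₀, hxi⟩ := Set.mem_iUnion.mp (hTV hxT)
    obtain ⟨B', ⟨hB'o, hB'c⟩, hxB', hB'sub⟩ :=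
      hbasis.exists_subset_of_mem_open hxi (hV i₀)
    have hx1 : x ∈ @closure X (patchTop X) (B' ∩ K) :=
      hcl B' hB'o hB'c x (hTL hxT) hxB'
    have hsub2 : B' ∩ K ⊆ U := by
      intro y hy
      exact hs ⟨hy.2, Set.mem_iUnion.mpr ⟨i₀, hB'sub hy.1⟩⟩
    have hsub3 := @aux_closure_subset X (patchTop X) (B' ∩ K) U hsub2 hUclosed
    exact hUsub (hsub3 hx1)
  rw [TopologicalSpace.noetherianSpace_iff_isCompact]
  intro s
  rw [IsEmbedding.subtypeVal.isCompact_iff]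
  exact main _ (by rintro x ⟨y, _, rfl⟩; exact y.2)
end

section
/- Let A be a commutative von Neumann regular ring and P a prime ideal that is an isolated point of Spec(A) (i.e., {P} is open in the Zariski topology). Then there exists an idempotent a ∈ A such that P = (1 − a), A = (a) ⊕ P as A-modules, and (a) is a nonzero minimal ideal of A. -/
open Ordinal

private lemma vnr_red {A : Type*} [CommRing A] (c x : A) (hcx : c * x * c = c) :
    ∀ n : ℕ, c ^ (n + 1) = 0 → c = 0 := by
  have key : ∀ n : ℕ, c = x ^ n * c ^ (n + 1) := by
    intro n
    induction n with
    | zero => simp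
    | succ n ih =>
      have h2 : c ^ (n + 1) = x * c ^ (n + 2) := by
        have : c ^ (n + 1) = c ^ n * (c * x * c) := by rw [hcx]; ring
        rw [this]; ring
      calc c = x ^ n * c ^ (n + 1) := ih
        _ = x ^ n * (x * c ^ (n + 2)) := by rw [← h2]
        _ = x ^ (n + 1) * c ^ (n + 2) := by ring
  intro n hn
  rw [key n, hn, mul_zero]

/-- An isolated point of the spectrum of a commutative von Neumann regular
ring corresponds to an idempotent decomposition with a nonzero minimal ideal
complement. -/
theorem stmt4 (A : Type*) [CommRing A] (hA : ∀ a : A, ∃ x, a * x * a = a)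
    (P : PrimeSpectrum A) (hP : IsOpen ({P} : Set (PrimeSpectrum A))) :
    ∃ a : A, IsIdempotentElem a ∧ P.asIdeal = Ideal.span {1 - a} ∧
      IsCompl (Ideal.span {a} : Ideal A) P.asIdeal ∧
      (Ideal.span {a} : Ideal A) ≠ ⊥ ∧
      ∀ J : Ideal A, J ≠ ⊥ → J ≤ Ideal.span {a} → J = Ideal.span {a} := by
  -- extract a basic open equal to {P}
  obtain ⟨U, ⟨b, hb⟩, hPU, hUsub⟩ :=
    PrimeSpectrum.isTopologicalBasis_basic_opens.exists_subset_of_mem_open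
      (Set.mem_singleton P) hP
  subst hb
  obtain ⟨x, hx⟩ := hA b
  set a := b * x with ha_def
  have hx2 : b * x * b = b := hx
  have haidem : IsIdempotentElem a := by
    show b * x * (b * x) = b * x
    calc b * x * (b * x) = (b * x * b) * x := by ring
      _ = b * x := by rw [hx2]
  have hbP : b ∉ P.asIdeal := hPU
  have hba : b = a * b := by
    show b = b * x * b
    rw [hx2]
  -- any prime avoiding a is P
  have hsub : ∀ Q : PrimeSpectrum A, a ∉ Q.asIdeal → Q = P := by
    intro Q hQ
    have hbQ : b ∉ Q.asIdeal := fun h => hQ (ha_def ▸ Ideal.mul_mem_right x _ h)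
    exact hUsub hbQ
  have haP : a ∉ P.asIdeal := fun h => hbP (hba ▸ Ideal.mul_mem_right b _ h)
  -- key lemma
  have hkey : ∀ c : A, a * c = c → c ∈ P.asIdeal → c = 0 := by
    intro c hac hcP
    by_contra hc
    have hnil : ¬ IsNilpotent c := by
      rintro ⟨n, hn⟩
      obtain ⟨y, hy⟩ := hA c
      cases n with
      | zero =>
        simp only [pow_zero] at hn
        exact hc (by calc c = c * 1 := (mul_one c).symm
          _ = c * 0 := by rw [hn]
          _ = 0 := mul_zero c)
      | succ n => exact hc (vnr_red c y hy n hn)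
    have hmem : c ∉ nilradical A := fun h => hnil (mem_nilradical.mp h)
    rw [nilradical_eq_sInf, Ideal.mem_sInf] at hmem
    push_neg at hmem
    obtain ⟨J, hJprime, hcJ⟩ := hmem
    haveI : J.IsPrime := hJprime
    set Q : PrimeSpectrum A := ⟨J, hJprime⟩ with hQ
    have haQ : a ∉ Q.asIdeal := fun h => hcJ (hac ▸ Ideal.mul_mem_right c _ h)
    have hQP := hsub Q haQ
    rw [← hQP] at hcP
    exact hcJ hcP
  have h1aP : (1 - a) ∈ P.asIdeal := by
    have h0 : a * (1 - a) = 0 := by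
      have := haidem; unfold IsIdempotentElem at this
      calc a * (1 - a) = a - a * a := by ring
        _ = 0 := by rw [this]; ring
    rcases P.isPrime.mem_or_mem (h0 ▸ P.asIdeal.zero_mem) with h | h
    · exact absurd h haP
    · exact h
  have hPeq : P.asIdeal = Ideal.span {1 - a} := by
    apply le_antisymm
    · intro p hp
      have hpa : p * a = 0 := hkey (p * a)
        (by calc a * (p * a) = p * (a * a) := by ring
          _ = p * a := by rw [haidem]) (Ideal.mul_mem_right a _ hp)
      rw [Ideal.mem_span_singleton]
      exact ⟨p, by calc p = p - p * a := by rw [hpa]; ring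
        _ = (1 - a) * p := by ring⟩
    · rw [Ideal.span_le, Set.singleton_subset_iff]
      exact h1aP
  have ha0 : a ≠ 0 := fun h => haP (h ▸ P.asIdeal.zero_mem)
  refine ⟨a, haidem, hPeq, ⟨?_, ?_⟩, ?_, ?_⟩
  · -- disjoint
    rw [disjoint_iff, eq_bot_iff]
    intro c hc
    obtain ⟨hc1, hc2⟩ := Submodule.mem_inf.mp hc
    obtain ⟨t, ht⟩ := Ideal.mem_span_singleton.mp hc1
    have hac : a * c = c := by
      rw [ht]; calc a * (a * t) = a * a * t := by ring
        _ = a * t := by rw [haidem]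
    exact hkey c hac hc2
  · -- codisjoint
    rw [codisjoint_iff, eq_top_iff]
    intro y _
    have : y = y * a + y * (1 - a) := by ring
    rw [this]
    exact Submodule.add_mem_sup
      (Ideal.mem_span_singleton.mpr ⟨y, mul_comm y a⟩)
      (Ideal.mul_mem_left _ y h1aP)
  · -- nonzero
    intro h
    have ha : a ∈ (⊥ : Ideal A) := h ▸ Ideal.subset_span (Set.mem_singleton a)
    exact ha0 (by simpa using ha)
  · -- minimal
    intro J hJ hJle
    obtain ⟨j, hjJ, hj0⟩ := Submodule.exists_mem_ne_zero_of_ne_bot hJ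
    obtain ⟨t, ht⟩ := Ideal.mem_span_singleton.mp (hJle hjJ)
    have haj : a * j = j := by
      rw [ht]; calc a * (a * t) = a * a * t := by ring
        _ = a * t := by rw [haidem]
    obtain ⟨y, hy⟩ := hA j
    set f := j * y with hf
    have hfJ : f ∈ J := Ideal.mul_mem_right y _ hjJ
    have hff : f * f = f := by
      calc j * y * (j * y) = (j * y * j) * y := by ring
        _ = j * y := by rw [hy]
    have haf : a * f = f := by
      calc a * (j * y) = (a * j) * y := by ring
        _ = j * y := by rw [haj]
    have hf0 : f ≠ 0 := by
      intro h
      apply hj0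
      calc j = j * y * j := hy.symm
        _ = f * j := by rw [hf]
        _ = 0 := by rw [h, zero_mul]
    have hfP : f ∉ P.asIdeal := fun h => hf0 (hkey f haf h)
    have hfg : f * (a - f) = 0 := by
      calc f * (a - f) = a * f - f * f := by ring
        _ = f - f := by rw [haf, hff]
        _ = 0 := by ring
    have hgP : (a - f) ∈ P.asIdeal := by
      rcases P.isPrime.mem_or_mem (hfg ▸ P.asIdeal.zero_mem) with h | h
      · exact absurd h hfP
      · exact h
    have hag : a * (a - f) = a - f := by
      calc a * (a - f) = a * a - a * f := by ring
        _ = a - f := by rw [haidem, haf]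
    have hg0 : a - f = 0 := hkey _ hag hgP
    have haJ : a ∈ J := by
      have : a = f := by linear_combination hg0
      rw [this]; exact hfJ
    exact le_antisymm hJle (by rw [Ideal.span_le, Set.singleton_subset_iff]; exact haJ)
end

section
/- Let A be a commutative von Neumann regular ring. There is a bijection between the set of nonzero minimal ideals of A and the set of isolated points of the Zariski spectrum Spec(A). -/
open Ordinal

section Aux

variable {A : Type*} [CommRing A]

theorem aux_pow (hA : ∀ a : A, ∃ x, a * x * a = a) (a : A) {n : ℕ} (hn : a ^ n = 0) :
    a = 0 := by
  obtain ⟨x, hx⟩ := hA a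
  have key : ∀ m : ℕ, a = x ^ m * a ^ (m + 1) := by
    intro m
    induction m with
    | zero => simp
    | succ k ih =>
      calc a = x ^ k * a ^ (k + 1) := ih
        _ = x ^ k * a ^ k * a := by ring
        _ = x ^ k * a ^ k * (a * x * a) := by rw [hx]
        _ = x ^ (k + 1) * a ^ (k + 1 + 1) := by ring
  have h := key n
  rw [pow_succ, hn, zero_mul, mul_zero] at h
  exact h

theorem aux_exists_prime (hA : ∀ a : A, ∃ x, a * x * a = a) {a : A} (ha : a ≠ 0) :
    ∃ P : PrimeSpectrum A, a ∉ P.asIdeal := by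
  by_contra h
  push_neg at h
  have hmem : a ∈ nilradical A := by
    rw [nilradical_eq_sInf]
    exact Ideal.mem_sInf.mpr fun {J} hJ => h ⟨J, hJ⟩
  obtain ⟨n, hn⟩ := hmem
  exact ha (aux_pow hA a hn)

theorem aux_idem (hA : ∀ a : A, ∃ x, a * x * a = a) (a : A) :
    ∃ e : A, e * e = e ∧ Ideal.span {a} = Ideal.span {e} := by
  obtain ⟨x, hx⟩ := hA a
  refine ⟨x * a, ?_, ?_⟩
  · linear_combination x * hx
  · apply le_antisymm
    · rw [Ideal.span_singleton_le_span_singleton]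
      exact ⟨a, by linear_combination -hx⟩
    · rw [Ideal.span_singleton_le_span_singleton]
      exact ⟨x, by ring⟩

theorem aux_mem_ann {e : A} (he : e * e = e) (a : A) :
    a ∈ Ideal.span {1 - e} ↔ a * e = 0 := by
  rw [Ideal.mem_span_singleton]
  constructor
  · rintro ⟨c, rfl⟩
    linear_combination -c * he
  · intro h
    exact ⟨a, by linear_combination h⟩

theorem aux_prime {e : A} (he : e * e = e) (he0 : e ≠ 0)
    (hmin : ∀ J : Ideal A, J ≠ ⊥ → J ≤ Ideal.span {e} → J = Ideal.span {e}) :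
    (Ideal.span {1 - e} : Ideal A).IsPrime := by
  constructor
  · rw [Ne, Ideal.eq_top_iff_one, aux_mem_ann he, one_mul]
    exact he0
  · intro a b hab
    rw [aux_mem_ann he] at hab
    by_cases ha : a * e = 0
    · exact Or.inl ((aux_mem_ann he a).mpr ha)
    · right
      rw [aux_mem_ann he]
      have h1 : Ideal.span {a * e} ≤ Ideal.span {e} := by
        rw [Ideal.span_singleton_le_span_singleton]
        exact ⟨a, mul_comm a e⟩
      have h2 : Ideal.span {a * e} ≠ ⊥ := by
        rw [Ne, Ideal.span_singleton_eq_bot]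
        exact ha
      have h3 := hmin _ h2 h1
      have h4 : e ∈ Ideal.span {a * e} := by
        rw [h3]; exact Ideal.mem_span_singleton_self e
      obtain ⟨c, hc⟩ := Ideal.mem_span_singleton.mp h4
      calc b * e = b * (a * e * c) := by rw [← hc]
        _ = c * (a * b * e) := by ring
        _ = 0 := by rw [hab, mul_zero]

theorem aux_unique_prime {e : A} (he : e * e = e)
    (hmin : ∀ J : Ideal A, J ≠ ⊥ → J ≤ Ideal.span {e} → J = Ideal.span {e})
    {Q : Ideal A} (hQ : Q.IsPrime) (heQ : e ∉ Q) : Q = Ideal.span {1 - e} := by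
  apply le_antisymm
  · intro a haQ
    rw [aux_mem_ann he]
    by_contra hae
    have h1 : Ideal.span {a * e} ≤ Ideal.span {e} := by
      rw [Ideal.span_singleton_le_span_singleton]
      exact ⟨a, mul_comm a e⟩
    have h2 : Ideal.span {a * e} ≠ ⊥ := by
      rw [Ne, Ideal.span_singleton_eq_bot]
      exact hae
    have h3 := hmin _ h2 h1
    have h4 : e ∈ Ideal.span {a * e} := by
      rw [h3]; exact Ideal.mem_span_singleton_self e
    have hsub : Ideal.span {a * e} ≤ Q := by
      rw [Ideal.span_singleton_le_iff_mem]
      exact Q.mul_mem_right e haQ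
    exact heQ (hsub h4)
  · rw [Ideal.span_singleton_le_iff_mem]
    have h0 : e * (1 - e) ∈ Q := by
      have : e * (1 - e) = 0 := by linear_combination -he
      rw [this]; exact Q.zero_mem
    rcases hQ.mem_or_mem h0 with h | h
    · exact absurd h heQ
    · exact h

theorem aux_key1 (hA : ∀ a : A, ∃ x, a * x * a = a) {I : Ideal A} (hI0 : I ≠ ⊥)
    (hmin : ∀ J : Ideal A, J ≠ ⊥ → J ≤ I → J = I) :
    ∃ P : PrimeSpectrum A, IsOpen ({P} : Set (PrimeSpectrum A)) ∧
      {Q : PrimeSpectrum A | ¬ I ≤ Q.asIdeal} = {P} := by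
  obtain ⟨a, haI, ha0⟩ := Submodule.exists_mem_ne_zero_of_ne_bot hI0
  obtain ⟨e, he, hspan⟩ := aux_idem hA a
  have hae : Ideal.span {a} ≠ ⊥ := by
    rw [Ne, Ideal.span_singleton_eq_bot]; exact ha0
  have hIe : I = Ideal.span {e} := by
    rw [← hmin _ hae ((Ideal.span_singleton_le_iff_mem _).mpr haI)]
    exact hspan
  have he0 : e ≠ 0 := by
    intro h
    apply hI0
    rw [hIe, h]
    exact Ideal.span_singleton_eq_bot.mpr rfl
  have hmin' : ∀ J : Ideal A, J ≠ ⊥ → J ≤ Ideal.span {e} → J = Ideal.span {e} := by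
    rw [← hIe]; exact hmin
  have hp := aux_prime he he0 hmin'
  refine ⟨⟨Ideal.span {1 - e}, hp⟩, ?_, ?_⟩
  · have hset : ({⟨Ideal.span {1 - e}, hp⟩} : Set (PrimeSpectrum A)) =
        ↑(PrimeSpectrum.basicOpen e) := by
      ext Q
      simp only [Set.mem_singleton_iff, SetLike.mem_coe, PrimeSpectrum.mem_basicOpen]
      constructor
      · rintro rfl
        intro hmem
        have h := (aux_mem_ann he e).mp hmem
        rw [he] at h
        exact he0 h
      · intro hQ
        exact PrimeSpectrum.ext (aux_unique_prime he hmin' Q.isPrime hQ)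
    rw [hset]
    exact (PrimeSpectrum.basicOpen e).2
  · ext Q
    simp only [Set.mem_setOf_eq, Set.mem_singleton_iff, hIe,
      Ideal.span_singleton_le_iff_mem]
    constructor
    · intro hQ
      exact PrimeSpectrum.ext (aux_unique_prime he hmin' Q.isPrime hQ)
    · rintro rfl
      intro hmem
      have h := (aux_mem_ann he e).mp hmem
      rw [he] at h
      exact he0 h

theorem aux_key3 (hA : ∀ a : A, ∃ x, a * x * a = a) {P : PrimeSpectrum A}
    (hP : IsOpen ({P} : Set (PrimeSpectrum A))) :
    ∃ I : Ideal A, (I ≠ ⊥ ∧ ∀ J : Ideal A, J ≠ ⊥ → J ≤ I → J = I) ∧ ¬ I ≤ P.asIdeal := by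
  obtain ⟨t, ⟨a, rfl⟩, hPt, hsub⟩ :=
    PrimeSpectrum.isTopologicalBasis_basic_opens.exists_subset_of_mem_open
      (Set.mem_singleton P) hP
  obtain ⟨e, he, hspan⟩ := aux_idem hA a
  have hmem : ∀ Q : PrimeSpectrum A,
      Q ∈ (↑(PrimeSpectrum.basicOpen a) : Set (PrimeSpectrum A)) ↔ e ∉ Q.asIdeal := by
    intro Q
    rw [SetLike.mem_coe, PrimeSpectrum.mem_basicOpen]
    have : a ∈ Q.asIdeal ↔ e ∈ Q.asIdeal := by
      rw [← Ideal.span_singleton_le_iff_mem, ← Ideal.span_singleton_le_iff_mem, hspan]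
    rw [this]
  have hea : e ∉ P.asIdeal := (hmem P).mp hPt
  have he0 : e ≠ 0 := fun h => hea (h ▸ P.asIdeal.zero_mem)
  refine ⟨Ideal.span {e}, ⟨?_, ?_⟩, ?_⟩
  · rw [Ne, Ideal.span_singleton_eq_bot]
    exact he0
  · intro J hJ0 hJle
    obtain ⟨b, hbJ, hb0⟩ := Submodule.exists_mem_ne_zero_of_ne_bot hJ0
    obtain ⟨f, hf, hfspan⟩ := aux_idem hA b
    have h4 : Ideal.span {f} ≤ J := by
      rw [← hfspan]
      exact (Ideal.span_singleton_le_iff_mem _).mpr hbJ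
    have hfJ : f ∈ J := h4 (Ideal.mem_span_singleton_self f)
    obtain ⟨c, hc⟩ := Ideal.mem_span_singleton.mp
      (hfspan ▸ Ideal.mem_span_singleton_self b)
    have hf0 : f ≠ 0 := fun h => hb0 (by rw [hc, h, zero_mul])
    obtain ⟨d, hd⟩ := Ideal.mem_span_singleton.mp (hJle hfJ)
    have hfe : f * e = f := by
      calc f * e = e * d * e := by rw [hd]
        _ = d * (e * e) := by ring
        _ = e * d := by rw [he]; ring
        _ = f := hd.symm
    have hgf : (e - f) * f = 0 := by linear_combination hfe - hf
    have hgzero : e - f = 0 := by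
      by_contra hgne
      obtain ⟨Q, hQ⟩ := aux_exists_prime hA hgne
      have heQ : e ∉ Q.asIdeal := by
        intro h
        exact hQ (Ideal.sub_mem _ h (by rw [hd]; exact Q.asIdeal.mul_mem_right d h))
      have hQP : Q = P := hsub ((hmem Q).mpr heQ)
      obtain ⟨Q', hQ'⟩ := aux_exists_prime hA hf0
      have heQ' : e ∉ Q'.asIdeal := fun h =>
        hQ' (by rw [hd]; exact Q'.asIdeal.mul_mem_right d h)
      have hQP' : Q' = P := hsub ((hmem Q').mpr heQ')
      rw [hQP] at hQ
      rw [hQP'] at hQ'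
      have h0 : (e - f) * f ∈ P.asIdeal := by rw [hgf]; exact P.asIdeal.zero_mem
      rcases P.isPrime.mem_or_mem h0 with h | h
      · exact hQ h
      · exact hQ' h
    have hef : e = f := sub_eq_zero.mp hgzero
    apply le_antisymm hJle
    rw [Ideal.span_singleton_le_iff_mem, hef]
    exact hfJ
  · rw [Ideal.span_singleton_le_iff_mem]
    exact hea

theorem aux_key4 {I I' : Ideal A}
    (hI : I ≠ ⊥ ∧ ∀ J : Ideal A, J ≠ ⊥ → J ≤ I → J = I)
    (hI' : I' ≠ ⊥ ∧ ∀ J : Ideal A, J ≠ ⊥ → J ≤ I' → J = I')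
    {P : Ideal A} (hP : P.IsPrime) (h1 : ¬ I ≤ P) (h2 : ¬ I' ≤ P) : I = I' := by
  obtain ⟨u, huI, huP⟩ := SetLike.not_le_iff_exists.mp h1
  obtain ⟨v, hvI, hvP⟩ := SetLike.not_le_iff_exists.mp h2
  have huv : u * v ∉ P := fun h => (hP.mem_or_mem h).elim huP hvP
  have huv0 : u * v ≠ 0 := fun h => huv (h ▸ P.zero_mem)
  have hle1 : Ideal.span {u * v} ≤ I :=
    (Ideal.span_singleton_le_iff_mem _).mpr (I.mul_mem_right v huI)
  have hle2 : Ideal.span {u * v} ≤ I' :=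
    (Ideal.span_singleton_le_iff_mem _).mpr (I'.mul_mem_left u hvI)
  have hne : Ideal.span {u * v} ≠ ⊥ := by
    rw [Ne, Ideal.span_singleton_eq_bot]; exact huv0
  rw [← hI.2 _ hne hle1, ← hI'.2 _ hne hle2]

end Aux

/-- Bijection between nonzero minimal ideals of a commutative von Neumann
regular ring and isolated points of its spectrum. -/
theorem stmt5 (A : Type*) [CommRing A] (hA : ∀ a : A, ∃ x, a * x * a = a) :
    Nonempty ({I : Ideal A // I ≠ ⊥ ∧ ∀ J : Ideal A, J ≠ ⊥ → J ≤ I → J = I} ≃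
      {P : PrimeSpectrum A // IsOpen ({P} : Set (PrimeSpectrum A))}) := by
  classical
  refine ⟨{ toFun := fun x => ⟨(aux_key1 hA x.2.1 x.2.2).choose,
              (aux_key1 hA x.2.1 x.2.2).choose_spec.1⟩,
            invFun := fun y => ⟨(aux_key3 hA y.2).choose,
              (aux_key3 hA y.2).choose_spec.1⟩,
            left_inv := ?_, right_inv := ?_ }⟩
  · rintro ⟨I, hI⟩
    apply Subtype.ext
    have h1 := (aux_key1 hA hI.1 hI.2).choose_spec
    have h3 := (aux_key3 hA h1.1).choose_spec
    have hPI : ¬ I ≤ (aux_key1 hA hI.1 hI.2).choose.asIdeal := by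
      exact (Set.ext_iff.mp h1.2 _).mpr rfl
    exact aux_key4 h3.1 hI (aux_key1 hA hI.1 hI.2).choose.isPrime h3.2 hPI
  · rintro ⟨P, hP⟩
    apply Subtype.ext
    have h3 := (aux_key3 hA hP).choose_spec
    have h1 := (aux_key1 hA h3.1.1 h3.1.2).choose_spec
    have hm : P ∈ ({(aux_key1 hA h3.1.1 h3.1.2).choose} : Set (PrimeSpectrum A)) := by
      rw [← h1.2]
      exact h3.2
    exact (Set.mem_singleton_iff.mp hm).symm
end

section
/- Let A be a commutative von Neumann regular ring and P ∈ Spec(A). Then the socle of A (as an A-module) is contained in P if and only if P is not an isolated point of Spec(A). Consequently Spec(A/sA) is homeomorphic to the Cantor–Bendixson derivative δSpec(A) (the subspace of non-isolated points of Spec(A)). -/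
open Ordinal

/-- The socle of a commutative ring: the sum of all simple ideals. -/
def socleIdeal (A : Type*) [CommRing A] : Ideal A :=
  sSup {I : Ideal A | IsSimpleModule A I}

/-!
In a von Neumann regular ring every ideal is radical, so `span {a} ≤ span {b}` iff
`basicOpen a ≤ basicOpen b`. A simple ideal is generated by any of its nonzero elements, so
simple ideals correspond to the basic open sets that are minimal among the nonempty ones; as every
prime is maximal, these are the open singletons `{P}`, and the simple ideal belonging to `{P}` is
the one not contained in `P`. Hence `sA ⊄ P` iff `P` is isolated, and `Spec (A/sA) ≅ V(sA)` is
the set of non-isolated points.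
-/

open PrimeSpectrum

def IsVonNeumannRegular (A : Type*) [CommRing A] : Prop :=
  ∀ a : A, ∃ x, a * x * a = a

theorem Ideal.span_singleton_eq_of_isAtom {R : Type*} [CommSemiring R] {I : Ideal R}
    (hI : IsAtom I) {b : R} (hbI : b ∈ I) (hb : b ≠ 0) : Ideal.span {b} = I :=
  (hI.le_iff.mp ((Ideal.span_singleton_le_iff_mem I).mpr hbI)).resolve_left
    (by simpa using hb)

theorem PrimeSpectrum.isOpen_singleton_iff_exists_basicOpen_eq {R : Type*} [CommSemiring R]
    (P : PrimeSpectrum R) :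
    IsOpen ({P} : Set (PrimeSpectrum R)) ↔
      ∃ a : R, (basicOpen a : Set (PrimeSpectrum R)) = {P} := by
  refine ⟨fun h => ?_, fun ⟨a, ha⟩ => ha ▸ (basicOpen a).isOpen⟩
  obtain ⟨_, ⟨a, rfl⟩, hPa, haP⟩ := isTopologicalBasis_basic_opens.isOpen_iff.mp h P rfl
  exact ⟨a, Set.Subset.antisymm haP (Set.singleton_subset_iff.mpr hPa)⟩

noncomputable def PrimeSpectrum.quotientHomeomorphZeroLocus {R : Type*} [CommRing R]
    (I : Ideal R) : PrimeSpectrum (R ⧸ I) ≃ₜ zeroLocus (I : Set R) :=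
  (isClosedEmbedding_comap_of_surjective _ _ Ideal.Quotient.mk_surjective).toIsEmbedding
    |>.toHomeomorph.trans (Homeomorph.setCongr (by
      rw [range_comap_of_surjective _ _ Ideal.Quotient.mk_surjective, Ideal.mk_ker]))

namespace IsVonNeumannRegular

variable {A : Type*} [CommRing A]

theorem isRadical (hA : IsVonNeumannRegular A) (I : Ideal A) : I.IsRadical := by
  refine (Ideal.isRadical_iff_pow_one_lt 2 one_lt_two).mpr fun a ha => ?_
  obtain ⟨x, hx⟩ := hA a
  have hax : a = a ^ 2 * x := by
    calc a = a * x * a := hx.symm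
      _ = a ^ 2 * x := by ring
  exact hax ▸ I.mul_mem_right x ha

theorem isReduced (hA : IsVonNeumannRegular A) : IsReduced A :=
  ⟨fun a ha => by simpa using hA.isRadical 0 (mem_nilradical.mpr ha)⟩

theorem isMaximal (hA : IsVonNeumannRegular A) (P : Ideal A) [hP : P.IsPrime] : P.IsMaximal := by
  refine Ideal.isMaximal_iff.mpr ⟨fun h => hP.ne_top ((P.eq_top_iff_one).mpr h),
    fun J a hPJ haP haJ => ?_⟩
  obtain ⟨x, hx⟩ := hA a
  have hxa : a * (x * a - 1) ∈ P := by
    have : a * (x * a - 1) = 0 := by linear_combination hx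
    exact this ▸ P.zero_mem
  have hxaJ : x * a - 1 ∈ J := hPJ ((hP.mem_or_mem hxa).resolve_left haP)
  have hone : (1 : A) = x * a - (x * a - 1) := by ring
  exact hone ▸ J.sub_mem (J.mul_mem_left x haJ) hxaJ

theorem basicOpen_le_basicOpen_iff (hA : IsVonNeumannRegular A) (a b : A) :
    basicOpen a ≤ basicOpen b ↔ Ideal.span {a} ≤ Ideal.span {b} := by
  rw [PrimeSpectrum.basicOpen_le_basicOpen_iff, (hA.isRadical _).radical,
    Ideal.span_singleton_le_iff_mem]

theorem basicOpen_eq_bot_iff (hA : IsVonNeumannRegular A) (a : A) :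
    basicOpen a = ⊥ ↔ a = 0 := by
  have := hA.isReduced
  rw [PrimeSpectrum.basicOpen_eq_bot_iff, isNilpotent_iff_eq_zero]

theorem isAtom_span_of_basicOpen_eq_singleton (hA : IsVonNeumannRegular A) {P : PrimeSpectrum A}
    {a : A} (h : (basicOpen a : Set (PrimeSpectrum A)) = {P}) : IsAtom (Ideal.span {a}) := by
  have ha : a ≠ 0 := by
    rintro rfl
    simp at h
  refine ⟨by simpa using ha, fun J hJ => ?_⟩
  by_contra hJ0
  obtain ⟨b, hbJ, hb⟩ := Submodule.exists_mem_ne_zero_of_ne_bot hJ0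
  have hba : basicOpen b ≤ basicOpen a :=
    (hA.basicOpen_le_basicOpen_iff b a).mpr
      ((Ideal.span_singleton_le_iff_mem _).mpr (hJ.le hbJ))
  have hab : basicOpen a ≤ basicOpen b := by
    have hsub : (basicOpen b : Set (PrimeSpectrum A)) ⊆ {P} := h ▸ hba
    rcases Set.subset_singleton_iff_eq.mp hsub with hempty | hP
    · exact absurd ((hA.basicOpen_eq_bot_iff b).mp (SetLike.coe_injective hempty)) hb
    · exact SetLike.coe_subset_coe.mp (h ▸ hP.ge)
  exact hJ.not_ge (((hA.basicOpen_le_basicOpen_iff a b).mp hab).trans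
    ((Ideal.span_singleton_le_iff_mem J).mpr hbJ))

theorem exists_basicOpen_eq_singleton_of_isAtom (hA : IsVonNeumannRegular A)
    {P : PrimeSpectrum A} {I : Ideal A} (hI : IsAtom I) (hIP : ¬ I ≤ P.asIdeal) :
    ∃ a : A, (basicOpen a : Set (PrimeSpectrum A)) = {P} := by
  obtain ⟨b, hbI, hbP⟩ := SetLike.not_le_iff_exists.mp hIP
  refine ⟨b, Set.eq_singleton_iff_unique_mem.mpr ⟨hbP, fun Q hbQ => ?_⟩⟩
  by_contra hQP
  -- `Q` is maximal, so some `t ∈ Q` avoids `P`; then `b * t` still generates `I`,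
  -- yet lies in `Q`.
  obtain ⟨t, htQ, htP⟩ : ∃ t ∈ Q.asIdeal, t ∉ P.asIdeal := SetLike.not_le_iff_exists.mp
    fun hle => hQP (PrimeSpectrum.ext ((hA.isMaximal Q.asIdeal).eq_of_le P.isPrime.ne_top hle))
  have hbt : b * t ∉ P.asIdeal := P.isPrime.mul_notMem hbP htP
  have hspan : Ideal.span {b} ≤ Ideal.span {b * t} := by
    rw [Ideal.span_singleton_eq_of_isAtom hI hbI (fun h => hbP (h ▸ P.asIdeal.zero_mem)),
      Ideal.span_singleton_eq_of_isAtom hI (I.mul_mem_right t hbI)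
        (fun h => hbt (h ▸ P.asIdeal.zero_mem))]
  exact (hA.basicOpen_le_basicOpen_iff b (b * t)).mpr hspan hbQ (Q.asIdeal.mul_mem_left b htQ)

theorem socleIdeal_le_iff (hA : IsVonNeumannRegular A) (P : PrimeSpectrum A) :
    socleIdeal A ≤ P.asIdeal ↔ ¬ IsOpen ({P} : Set (PrimeSpectrum A)) := by
  simp only [socleIdeal, sSup_le_iff, Set.mem_ofPred_eq, isSimpleModule_iff_isAtom,
    isOpen_singleton_iff_exists_basicOpen_eq, not_exists]
  constructor
  · intro h a ha
    have hPa : P ∈ (basicOpen a : Set (PrimeSpectrum A)) := ha ▸ rfl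
    exact hPa (h _ (hA.isAtom_span_of_basicOpen_eq_singleton ha) (Ideal.mem_span_singleton_self a))
  · intro h I hI
    by_contra hIP
    obtain ⟨a, ha⟩ := hA.exists_basicOpen_eq_singleton_of_isAtom hI hIP
    exact h a ha

end IsVonNeumannRegular

/-- The socle of a commutative von Neumann regular ring is contained in a
prime `P` iff `P` is not isolated; hence `Spec (A/sA)` is homeomorphic to
the Cantor–Bendixson derivative of `Spec A`. -/
theorem stmt6 (A : Type*) [CommRing A] (hA : ∀ a : A, ∃ x, a * x * a = a) :
    (∀ P : PrimeSpectrum A,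
      socleIdeal A ≤ P.asIdeal ↔ ¬ IsOpen ({P} : Set (PrimeSpectrum A))) ∧
    Nonempty (PrimeSpectrum (A ⧸ socleIdeal A) ≃ₜ
      {P : PrimeSpectrum A // ¬ IsOpen ({P} : Set (PrimeSpectrum A))}) := by
  have hsocle := IsVonNeumannRegular.socleIdeal_le_iff hA
  refine ⟨hsocle, ⟨(quotientHomeomorphZeroLocus _).trans (Homeomorph.setCongr ?_)⟩⟩
  ext P
  exact SetLike.coe_subset_coe.trans (hsocle P)
end

section
/- Let A be a commutative von Neumann regular ring. Then the socle of A equals the intersection of all non-isolated prime ideals: sA = ⋂ {P ∈ Spec(A) : P is not isolated in Spec(A)}. -/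
open Ordinal

/-!
In a von Neumann regular ring every ideal is radical, so `I ↦ Spec A \ V(I)` is an order
isomorphism from the ideals of `A` onto the open subsets of `Spec A`. Every prime is maximal, so
`Spec A` is T1 and the atoms among its open sets are the open singletons `{P}`. The socle, being
the supremum of the atoms of the ideal lattice, thus corresponds to the open set of isolated
points, and is recovered as the vanishing ideal of its complement.
-/

open PrimeSpectrum TopologicalSpace

namespace TopologicalSpace.Opens

variable {α : Type*} [TopologicalSpace α] [T1Space α]

theorem isAtom_iff_eq_singleton {U : Opens α} :
    IsAtom U ↔ ∃ x, IsOpen {x} ∧ (U : Set α) = {x} := by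
  constructor
  · intro hU
    obtain ⟨x, hx⟩ := (Opens.ne_bot_iff_nonempty U).mp hU.1
    let V : Opens α := ⟨U ∩ {x}ᶜ, U.isOpen.inter isOpen_compl_singleton⟩
    have hV : V = ⊥ := hU.2 V (lt_of_le_of_ne (fun _ hy => hy.1) fun hVU => by
      simpa [V] using (SetLike.ext_iff.mp hVU x).mpr hx)
    have hUx : (U : Set α) = {x} := by
      refine Set.eq_singleton_iff_unique_mem.mpr ⟨hx, fun y hy => by_contra fun hyx => ?_⟩
      simpa [hV] using (show y ∈ V from ⟨hy, hyx⟩)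
    exact ⟨x, hUx ▸ U.isOpen, hUx⟩
  · rintro ⟨x, -, hUx⟩
    refine ⟨(Opens.ne_bot_iff_nonempty U).mpr (hUx ▸ Set.singleton_nonempty x), fun V hVU => ?_⟩
    have hV : (V : Set α) ⊂ {x} := hUx ▸ hVU
    exact SetLike.coe_injective (Set.ssubset_singleton_iff.mp hV)

theorem coe_sSup_setOf_isAtom :
    ((sSup {U : Opens α | IsAtom U} : Opens α) : Set α) = {x | IsOpen {x}} := by
  ext x
  simp only [SetLike.mem_coe, Opens.mem_sSup, Set.mem_ofPred_eq, isAtom_iff_eq_singleton]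
  constructor
  · rintro ⟨U, ⟨y, hy, hUy⟩, hxU⟩
    have hxy : x = y := by simpa [← SetLike.mem_coe, hUy] using hxU
    rwa [hxy]
  · intro hx
    exact ⟨⟨{x}, hx⟩, ⟨x, hx, rfl⟩, rfl⟩

end TopologicalSpace.Opens

section VonNeumannRegular

variable {A : Type*} [CommRing A]

theorem Ideal.isRadical_of_vonNeumannRegular (hA : ∀ a : A, ∃ x, a * x * a = a)
    (I : Ideal A) : I.IsRadical := by
  rintro a ⟨n, hn⟩
  obtain ⟨x, hx⟩ := hA a
  have descend : ∀ n : ℕ, a ^ (n + 1) ∈ I → a ∈ I := by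
    intro n
    induction n with
    | zero => simp
    | succ n ih =>
      intro h
      have hpow : a ^ (n + 1) = a ^ (n + 2) * x := by linear_combination (-(a ^ n)) * hx
      exact ih (hpow ▸ I.mul_mem_right x h)
  cases n with
  | zero => exact (I.eq_top_of_isUnit_mem hn (by simp)) ▸ Submodule.mem_top
  | succ n => exact descend n hn

theorem Ideal.IsPrime.isMaximal_of_vonNeumannRegular (hA : ∀ a : A, ∃ x, a * x * a = a)
    {P : Ideal A} (hP : P.IsPrime) : P.IsMaximal := by
  refine Ideal.isMaximal_iff.mpr ⟨fun h => hP.ne_top (P.eq_top_iff_one.mpr h), ?_⟩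
  intro J b hPJ hbP hbJ
  obtain ⟨x, hx⟩ := hA b
  have hb_mul : b * (x * b - 1) ∈ P := by
    rw [show b * (x * b - 1) = 0 by linear_combination hx]
    exact P.zero_mem
  have hxb : x * b - 1 ∈ P := (hP.mem_or_mem hb_mul).resolve_left hbP
  simpa using J.sub_mem (J.mul_mem_left x hbJ) (hPJ hxb)

theorem PrimeSpectrum.t1Space_of_vonNeumannRegular (hA : ∀ a : A, ∃ x, a * x * a = a) :
    T1Space (PrimeSpectrum A) :=
  ⟨fun P => (isClosed_singleton_iff_isMaximal P).mpr (P.2.isMaximal_of_vonNeumannRegular hA)⟩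

def PrimeSpectrum.idealOrderIsoOpens (h : ∀ I : Ideal A, I.IsRadical) :
    Ideal A ≃o Opens (PrimeSpectrum A) where
  toFun I := ⟨(zeroLocus I)ᶜ, (isClosed_zeroLocus _).isOpen_compl⟩
  invFun U := vanishingIdeal (U : Set (PrimeSpectrum A))ᶜ
  left_inv I := by
    change vanishingIdeal (zeroLocus I)ᶜᶜ = I
    rw [compl_compl, vanishingIdeal_zeroLocus_eq_radical, (h I).radical]
  right_inv U := by
    ext1
    change (zeroLocus (vanishingIdeal (U : Set (PrimeSpectrum A))ᶜ : Set A))ᶜ =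
      (U : Set (PrimeSpectrum A))
    rw [zeroLocus_vanishingIdeal_eq_closure, U.isOpen.isClosed_compl.closure_eq, compl_compl]
  map_rel_iff' {I J} := by
    change (zeroLocus (I : Set A))ᶜ ⊆ (zeroLocus (J : Set A))ᶜ ↔ I ≤ J
    rw [Set.compl_subset_compl, zeroLocus_subset_zeroLocus_iff, (h J).radical]

end VonNeumannRegular

/-- The socle of a commutative von Neumann regular ring equals the
intersection of all non-isolated primes. -/
theorem stmt7 (A : Type*) [CommRing A] (hA : ∀ a : A, ∃ x, a * x * a = a) :
    socleIdeal A =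
      ⨅ (P : PrimeSpectrum A) (_ : ¬ IsOpen ({P} : Set (PrimeSpectrum A))),
        P.asIdeal := by
  have := PrimeSpectrum.t1Space_of_vonNeumannRegular hA
  let e := PrimeSpectrum.idealOrderIsoOpens (Ideal.isRadical_of_vonNeumannRegular hA)
  have hsocle : socleIdeal A = sSup {I : Ideal A | IsAtom I} := by
    simp only [socleIdeal, isSimpleModule_iff_isAtom]
  have hisolated : (e (socleIdeal A) : Set (PrimeSpectrum A)) = {P | IsOpen {P}} := by
    rw [hsocle, e.map_sSup_eq_sSup_symm_preimage]
    simp only [Set.preimage_ofPred_eq, e.symm.isAtom_iff]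
    exact Opens.coe_sSup_setOf_isAtom
  calc socleIdeal A = vanishingIdeal (e (socleIdeal A) : Set (PrimeSpectrum A))ᶜ :=
        (e.symm_apply_apply _).symm
    _ = vanishingIdeal {P | ¬ IsOpen {P}} := by rw [hisolated]; rfl
end
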